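/- arXiv:1112.1548 — 9 statements merged into one kernel-verified Lean document; each statement's English description precedes it below -/
import Mathlib

section
/- There exists a constant C > 0 such that for all sufficiently large natural numbers n there is a 2-coloring of the edges of the complete graph on the vertex set {2, 3, ..., n} in which every monochromatic clique S satisfies ∑_{s ∈ S} 1/log₂ s ≤ C · log₂ log₂ log₂ n. -/
/-!
Group the integers `s` by their level `⌊log₂ log₂ s⌋`. The integers of level `a` lie below
`2 ^ 2 ^ (a + 1)` and weigh at most `2 ^ (-a)` each, so inside a level an Erdős coloring, whose
monochromatic cliques have size `O(2 ^ a)`, leaves every clique a weight `O(1)` per level. Pairs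
from different levels are colored by an Erdős coloring of the levels themselves; there are about
`log₂ log₂ n` of them, so a monochromatic clique meets only `O(log₂ log₂ log₂ n)` levels.
-/

open Finset

-- Stated as a product to avoid truncated subtraction in the exponent.
theorem card_filter_forall_eq_mul_pow {E β : Type*} [Fintype E] [DecidableEq E] [Fintype β]
    [DecidableEq β] (P : Finset E) (b : β) :
    #{g : E → β | ∀ e ∈ P, g e = b} * Fintype.card β ^ #P = Fintype.card β ^ Fintype.card E := by
  have : ({g : E → β | ∀ e ∈ P, g e = b} : Finset (E → β)) =
      Fintype.piFinset fun e => if e ∈ P then {b} else univ := by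
    ext g
    simp only [mem_filter, mem_univ, true_and, Fintype.mem_piFinset]
    refine forall_congr' fun e => ?_
    split_ifs <;> simp [*]
  simp only [this, Fintype.card_piFinset, apply_ite card, card_singleton, card_univ]
  rw [prod_ite, prod_const_one, one_mul, prod_const, ← pow_add, filter_not, filter_mem_eq_inter,
    univ_inter, ← compl_eq_univ_sdiff, card_compl_add_card]

def IsMonochromatic {α : Type*} [LT α] (c : α → α → Fin 2) (S : Finset α) : Prop :=
  ∃ clr, ∀ i ∈ S, ∀ j ∈ S, i < j → c i j = clr

theorem IsMonochromatic.subset {α : Type*} [LT α] {c : α → α → Fin 2} {S T : Finset α}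
    (h : IsMonochromatic c S) (hTS : T ⊆ S) : IsMonochromatic c T :=
  let ⟨clr, h⟩ := h
  ⟨clr, fun i hi j hj => h i (hTS hi) j (hTS hj)⟩

-- Erdős: a union bound over the 2-colorings of the 2-subsets of `α`.
theorem exists_coloring_forall_isMonochromatic_card_lt {α : Type*} [Fintype α] [LinearOrder α]
    (t : ℕ) (h : (Fintype.card α).choose t * 2 < 2 ^ t.choose 2) :
    ∃ c : α → α → Fin 2, ∀ S, IsMonochromatic c S → #S < t := by
  classical
  let Forced : Finset α × Fin 2 → Finset (Finset α → Fin 2) := fun p =>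
    {g | ∀ e ∈ p.1.powersetCard 2, g e = p.2}
  let Bad := (univ.powersetCard t ×ˢ univ).biUnion Forced
  have h_forced (p) (hp : p ∈ univ.powersetCard t ×ˢ univ) :
      #(Forced p) * 2 ^ t.choose 2 = 2 ^ Fintype.card (Finset α) := by
    have := card_filter_forall_eq_mul_pow (p.1.powersetCard 2) p.2
    rwa [card_powersetCard, (mem_powersetCard_univ.1 (mem_product.1 hp).1), Fintype.card_fin]
      at this
  have h_bad : #Bad < #(univ : Finset (Finset α → Fin 2)) := by
    refine lt_of_mul_lt_mul_right (a := 2 ^ t.choose 2) ?_ (Nat.zero_le _)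
    calc #Bad * 2 ^ t.choose 2
        ≤ ∑ p ∈ univ.powersetCard t ×ˢ univ, #(Forced p) * 2 ^ t.choose 2 := by
          rw [← sum_mul]; gcongr; exact card_biUnion_le
      _ = (Fintype.card α).choose t * 2 * 2 ^ Fintype.card (Finset α) := by
          rw [sum_congr rfl h_forced, sum_const, card_product, card_powersetCard, card_univ,
            card_univ, Fintype.card_fin, smul_eq_mul]
      _ < 2 ^ t.choose 2 * 2 ^ Fintype.card (Finset α) := by gcongr
      _ = _ := by rw [card_univ, Fintype.card_fun, Fintype.card_fin, mul_comm]
  obtain ⟨g, -, hg⟩ := exists_mem_notMem_of_card_lt_card h_bad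
  refine ⟨fun i j => g {i, j}, fun S hS => ?_⟩
  by_contra! ht
  obtain ⟨T, hTS, hT⟩ := exists_subset_card_eq ht
  obtain ⟨clr, hclr⟩ := hS.subset hTS
  refine hg (mem_biUnion.2 ⟨(T, clr), by simp [hT], mem_filter.2 ⟨mem_univ _, fun e he => ?_⟩⟩)
  obtain ⟨he, he2⟩ := mem_powersetCard.1 he
  obtain ⟨i, j, hij, rfl⟩ := card_eq_two.1 he2
  rcases hij.lt_or_gt with hij | hji
  · exact hclr i (he (by simp)) j (he (by simp)) hij
  · rw [pair_comm]
    exact hclr j (he (by simp)) i (he (by simp)) hji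

theorem choose_two_pow_mul_two_lt (a : ℕ) :
    (2 ^ a).choose (2 * a + 3) * 2 < 2 ^ (2 * a + 3).choose 2 := by
  have h_pairs : (2 * a + 3).choose 2 = (2 * a + 3) * (a + 1) := by
    rw [Nat.choose_two_right, show 2 * a + 3 - 1 = (a + 1) * 2 by omega, ← mul_assoc,
      Nat.mul_div_cancel _ two_pos]
  calc (2 ^ a).choose (2 * a + 3) * 2 ≤ (2 ^ a) ^ (2 * a + 3) * 2 := by
        gcongr; exact Nat.choose_le_pow _ _
    _ = 2 ^ (a * (2 * a + 3) + 1) := by rw [← pow_mul, pow_succ]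
    _ < 2 ^ (2 * a + 3).choose 2 := by
        rw [h_pairs]; exact Nat.pow_lt_pow_right one_lt_two (by nlinarith)

theorem exists_coloring_range_two_pow_card_le (a : ℕ) :
    ∃ c : ℕ → ℕ → Fin 2, ∀ S ⊆ range (2 ^ a), IsMonochromatic c S → #S ≤ 2 * a + 2 := by
  obtain ⟨c, hc⟩ := exists_coloring_forall_isMonochromatic_card_lt (α := Fin (2 ^ a)) (2 * a + 3)
    (by simpa using choose_two_pow_mul_two_lt a)
  refine ⟨fun i j => if h : i < 2 ^ a ∧ j < 2 ^ a then c ⟨i, h.1⟩ ⟨j, h.2⟩ else 0,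
    fun S hS ⟨clr, hclr⟩ => ?_⟩
  have hS' : ∀ i ∈ S, i < 2 ^ a := fun i hi => mem_range.1 (hS hi)
  have := hc (S.attachFin hS') ⟨clr, fun i hi j hj hij => ?_⟩
  · rw [card_attachFin] at this
    omega
  · simpa using hclr i ((mem_attachFin hS').1 hi) j ((mem_attachFin hS').1 hj) hij

def blockColoring {α ι : Type*} [DecidableEq ι] (k : α → ι) (inner : ι → α → α → Fin 2)
    (outer : ι → ι → Fin 2) (i j : α) : Fin 2 :=
  if k i = k j then inner (k i) i j else outer (k i) (k j)

section blockColoring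

variable {α ι : Type*} [DecidableEq ι] {k : α → ι} {inner : ι → α → α → Fin 2}
  {outer : ι → ι → Fin 2} {S : Finset α}

theorem IsMonochromatic.filter_blockColoring [LT α]
    (h : IsMonochromatic (blockColoring k inner outer) S) (a : ι) :
    IsMonochromatic (inner a) {s ∈ S | k s = a} := by
  obtain ⟨clr, h⟩ := h
  refine ⟨clr, fun i hi j hj hij => ?_⟩
  rw [mem_filter] at hi hj
  simpa [blockColoring, hi.2, hj.2] using h i hi.1 j hj.1 hij

theorem IsMonochromatic.image_blockColoring [LinearOrder α] [Preorder ι] (hk : Monotone k)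
    (h : IsMonochromatic (blockColoring k inner outer) S) : IsMonochromatic outer (S.image k) := by
  obtain ⟨clr, h⟩ := h
  refine ⟨clr, ?_⟩
  simp only [mem_image]
  rintro _ ⟨i, hi, rfl⟩ _ ⟨j, hj, rfl⟩ hij
  simpa [blockColoring, hij.ne] using h i hi j hj (hk.reflect_lt hij)

end blockColoring

theorem sum_le_card_image_nsmul {α ι M : Type*} [DecidableEq ι] [AddCommMonoid M] [PartialOrder M]
    [IsOrderedAddMonoid M] (S : Finset α) (k : α → ι) (f : α → M) (B : M)
    (h : ∀ a ∈ S.image k, ∑ s ∈ S with k s = a, f s ≤ B) :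
    ∑ s ∈ S, f s ≤ #(S.image k) • B := by
  rw [← sum_fiberwise_of_maps_to fun s hs => mem_image_of_mem k hs]
  exact sum_le_card_nsmul _ _ _ h

theorem lt_two_pow_two_pow_log_log_succ (s : ℕ) : s < 2 ^ 2 ^ (Nat.log 2 (Nat.log 2 s) + 1) :=
  (Nat.lt_pow_succ_log_self one_lt_two s).trans_le <|
    Nat.pow_le_pow_right two_pos (Nat.lt_pow_succ_log_self one_lt_two _)

theorem two_pow_log_log_le_logb {s : ℕ} (hs : 2 ≤ s) :
    (2 : ℝ) ^ Nat.log 2 (Nat.log 2 s) ≤ Real.logb 2 s :=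
  calc (2 : ℝ) ^ Nat.log 2 (Nat.log 2 s) ≤ (Nat.log 2 s : ℝ) := by
        exact_mod_cast Nat.pow_log_le_self 2 (Nat.log_pos one_lt_two hs).ne'
    _ ≤ Real.logb 2 s := Real.natLog_le_logb s 2

theorem sum_one_div_logb_le_six {T : Finset ℕ} {a : ℕ}
    (hT : ∀ s ∈ T, 2 ≤ s ∧ Nat.log 2 (Nat.log 2 s) = a) (h_card : #T ≤ 2 * 2 ^ (a + 1) + 2) :
    ∑ s ∈ T, 1 / Real.logb 2 s ≤ 6 := by
  have h_pow : (1 : ℝ) ≤ 2 ^ a := one_le_pow₀ one_le_two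
  calc ∑ s ∈ T, 1 / Real.logb 2 s ≤ #T • (1 / 2 ^ a) := by
        refine sum_le_card_nsmul _ _ _ fun s hs => ?_
        obtain ⟨hs2, rfl⟩ := hT s hs
        gcongr
        exact two_pow_log_log_le_logb hs2
    _ ≤ (4 * 2 ^ a + 2) * (1 / 2 ^ a) := by
        rw [nsmul_eq_mul]
        gcongr
        exact_mod_cast h_card.trans_eq (by ring)
    _ ≤ 6 := by
        rw [mul_one_div, div_le_iff₀ (by positivity)]
        linarith

theorem natLog_le_logb_of_le {b k : ℕ} {x : ℝ} (hb : 1 < b) (hk : 0 < k) (h : (k : ℝ) ≤ x) :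
    (Nat.log b k : ℝ) ≤ Real.logb b x :=
  (Real.natLog_le_logb k b).trans
    (Real.logb_le_logb_of_le (by exact_mod_cast hb) (by exact_mod_cast hk) h)

theorem log_log_log_le_logb_logb_logb {n : ℕ} (hn : 0 < Nat.log 2 (Nat.log 2 n)) :
    (Nat.log 2 (Nat.log 2 (Nat.log 2 n)) : ℝ) ≤ Real.logb 2 (Real.logb 2 (Real.logb 2 n)) :=
  have h_log_n : 0 < Nat.log 2 n := Nat.pos_of_ne_zero fun h => by simp [h] at hn
  natLog_le_logb_of_le one_lt_two hn
    (natLog_le_logb_of_le one_lt_two h_log_n (Real.natLog_le_logb n 2))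

theorem le_log_log_of_pow_le {k n : ℕ} (hn : 2 ^ 2 ^ k ≤ n) : k ≤ Nat.log 2 (Nat.log 2 n) :=
  Nat.le_log_of_pow_le one_lt_two <| Nat.le_log_of_pow_le one_lt_two hn

/-- There is a constant `C > 0` such that for all sufficiently large `n`
there is a 2-coloring of the edges of the complete graph on `{2, ..., n}` in which every
monochromatic clique `S` satisfies `∑_{s ∈ S} 1 / log₂ s ≤ C · log₂ log₂ log₂ n`. -/
theorem weighted_ramsey_upper_bound :
    ∃ C : ℝ, 0 < C ∧ ∃ N : ℕ, ∀ n : ℕ, N ≤ n →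
      ∃ c : ℕ → ℕ → Fin 2,
        ∀ S : Finset ℕ, S ⊆ Finset.Icc 2 n →
          (∃ clr : Fin 2, ∀ i ∈ S, ∀ j ∈ S, i < j → c i j = clr) →
          ∑ s ∈ S, 1 / Real.logb 2 (s : ℝ) ≤
            C * Real.logb 2 (Real.logb 2 (Real.logb 2 (n : ℝ))) := by
  choose inner h_inner using fun a => exists_coloring_range_two_pow_card_le (2 ^ (a + 1))
  refine ⟨18, by norm_num, 2 ^ 2 ^ 2 ^ 4, fun n hn => ?_⟩
  let level (s : ℕ) : ℕ := Nat.log 2 (Nat.log 2 s)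
  have h_level : Monotone level := fun i j h => Nat.log_mono_right (Nat.log_mono_right h)
  obtain ⟨outer, h_outer⟩ := exists_coloring_range_two_pow_card_le (Nat.log 2 (level n) + 1)
  refine ⟨blockColoring level inner outer, fun S hS (hmono : IsMonochromatic _ S) => ?_⟩
  have h_mem (s) (hs : s ∈ S) : 2 ≤ s ∧ s ≤ n := mem_Icc.1 (hS hs)
  have h_block (a) : ∑ s ∈ S with level s = a, 1 / Real.logb 2 s ≤ 6 := by
    refine sum_one_div_logb_le_six (fun s hs => ⟨(h_mem s (mem_filter.1 hs).1).1,
      (mem_filter.1 hs).2⟩) (h_inner a _ (fun s hs => ?_) (hmono.filter_blockColoring a))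
    rw [mem_range, ← (mem_filter.1 hs).2]
    exact lt_two_pow_two_pow_log_log_succ s
  have h_levels : #(S.image level) ≤ 2 * (Nat.log 2 (level n) + 1) + 2 := by
    refine h_outer _ (fun a ha => ?_) (hmono.image_blockColoring h_level)
    obtain ⟨s, hs, rfl⟩ := mem_image.1 ha
    exact mem_range.2 ((Nat.lt_succ_of_le (h_level (h_mem s hs).2)).trans_le
      (Nat.lt_pow_succ_log_self one_lt_two _))
  have h_level_n : 2 ^ 4 ≤ level n := le_log_log_of_pow_le hn
  have h_log_level_n : 4 ≤ Nat.log 2 (level n) := Nat.le_log_of_pow_le one_lt_two h_level_n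
  -- With `k = Nat.log 2 (level n) ≥ 4`: each level weighs at most 6, and there are at most
  -- `2 k + 4 ≤ 3 k` levels.
  calc ∑ s ∈ S, 1 / Real.logb 2 s ≤ #(S.image level) • (6 : ℝ) :=
        sum_le_card_image_nsmul _ _ _ _ fun a _ => h_block a
    _ ≤ 18 * (Nat.log 2 (level n) : ℝ) := by
        rw [nsmul_eq_mul]
        exact_mod_cast (by omega : #(S.image level) * 6 ≤ 18 * Nat.log 2 (level n))
    _ ≤ 18 * Real.logb 2 (Real.logb 2 (Real.logb 2 n)) := by
        gcongr
        exact log_log_log_le_logb_logb_logb (lt_of_lt_of_le (by norm_num) h_level_n)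
end

section
/- For all sufficiently large natural numbers n there exists a 3-coloring of the edges of the complete graph on the vertex set {2, 3, ..., n} in which every monochromatic clique S satisfies ∑_{s ∈ S} 1/log₂ s ≤ 4. -/
/-!
Sort the vertices into levels: `s` has level `j` when `2 ^ 2 ^ j ≤ s < 2 ^ 2 ^ (j + 1)`, so a
vertex of level `j` has weight at most `2⁻ʲ`. Edges between different levels get the third
color. Level `j` has fewer than `2 ^ (2 * 2 ^ j)` vertices, so Erdős's counting argument gives
a 2-coloring of it without monochromatic cliques of size `4 * 2 ^ j + 1`. A clique in the third
color meets every level at most once and has weight at most `∑ 2⁻ʲ ≤ 2`; a clique in one of the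
other two colors lies inside a single level `j`, so it has at most `4 * 2 ^ j` vertices, each of
weight at most `2⁻ʲ`.
-/

open Finset

namespace WeightedRamsey

section Monochromatic

variable {α κ : Type*}

def IsMonochromatic [LT α] (c : α → α → κ) (k : κ) (S : Finset α) : Prop :=
  ∀ x ∈ S, ∀ y ∈ S, x < y → c x y = k

theorem IsMonochromatic.subset [LT α] {c : α → α → κ} {k : κ} {S T : Finset α}
    (h : IsMonochromatic c k S) (hTS : T ⊆ S) : IsMonochromatic c k T :=
  fun x hx y hy => h x (hTS hx) y (hTS hy)

theorem card_lt_of_isMonochromatic [LT α] {c : α → α → κ} {V : Finset α} {M : ℕ}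
    (hc : ∀ S ⊆ V, #S = M → ∀ k, ¬IsMonochromatic c k S) {S : Finset α} {k : κ}
    (hSV : S ⊆ V) (hS : IsMonochromatic c k S) : #S < M := by
  by_contra! hMS
  obtain ⟨T, hTS, hT⟩ := exists_subset_card_eq hMS
  exact hc T (hTS.trans hSV) hT k (hS.subset hTS)

end Monochromatic

theorem card_filter_subset_or_disjoint_mul_le {β : Type*} [DecidableEq β] {A E : Finset β}
    (hAE : A ⊆ E) : #{T ∈ E.powerset | A ⊆ T ∨ Disjoint A T} * 2 ^ #A ≤ 2 * 2 ^ #E := by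
  have h_sup : {T ∈ E.powerset | A ⊆ T} = Icc A E := by
    ext T; simp [and_comm]
  have h_disj : {T ∈ E.powerset | Disjoint A T} = (E \ A).powerset := by
    ext T; simp [subset_sdiff, disjoint_comm]
  calc #{T ∈ E.powerset | A ⊆ T ∨ Disjoint A T} * 2 ^ #A
      ≤ (#{T ∈ E.powerset | A ⊆ T} + #{T ∈ E.powerset | Disjoint A T}) * 2 ^ #A := by
        rw [filter_or]; gcongr; exact card_union_le _ _
    _ = (2 ^ (#E - #A) + 2 ^ (#E - #A)) * 2 ^ #A := by
        rw [h_sup, h_disj, card_Icc_finset hAE, card_powerset, card_sdiff_of_subset hAE]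
    _ = 2 * 2 ^ #E := by
        rw [← two_mul, mul_assoc, ← pow_add, Nat.sub_add_cancel (card_le_card hAE)]

theorem exists_coloring_forall_not_isMonochromatic {α : Type*} [LinearOrder α] (V : Finset α)
    (M : ℕ) (h : 2 * (#V).choose M < 2 ^ M.choose 2) :
    ∃ χ : α → α → Fin 2, ∀ S ⊆ V, #S = M → ∀ k, ¬IsMonochromatic χ k S := by
  set E := V.powersetCard 2
  have h_bad : #{R ∈ E.powerset | ∃ S ∈ V.powersetCard M,
      S.powersetCard 2 ⊆ R ∨ Disjoint (S.powersetCard 2) R} < #E.powerset := by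
    refine Nat.lt_of_mul_lt_mul_right (a := 2 ^ M.choose 2) ?_
    calc _ ≤ #((V.powersetCard M).biUnion fun S => {R ∈ E.powerset |
            S.powersetCard 2 ⊆ R ∨ Disjoint (S.powersetCard 2) R}) * 2 ^ M.choose 2 := by
          gcongr
          intro R
          simp only [mem_filter, mem_biUnion]
          exact fun ⟨hR, S, hS, hSR⟩ => ⟨S, hS, hR, hSR⟩
      _ ≤ (∑ S ∈ V.powersetCard M, #{R ∈ E.powerset |
            S.powersetCard 2 ⊆ R ∨ Disjoint (S.powersetCard 2) R}) * 2 ^ M.choose 2 := by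
          gcongr
          exact card_biUnion_le
      _ ≤ ∑ S ∈ V.powersetCard M, 2 * 2 ^ #E := by
          rw [sum_mul]
          refine sum_le_sum fun S hS => ?_
          rw [mem_powersetCard] at hS
          rw [← hS.2, ← card_powersetCard]
          exact card_filter_subset_or_disjoint_mul_le (powersetCard_mono hS.1)
      _ = 2 * (#V).choose M * 2 ^ #E := by rw [sum_const, card_powersetCard, smul_eq_mul]; ring
      _ < 2 ^ M.choose 2 * 2 ^ #E := by gcongr
      _ = #E.powerset * 2 ^ M.choose 2 := by rw [card_powerset, mul_comm]
  obtain ⟨R, hRE, hR⟩ := exists_mem_notMem_of_card_lt_card h_bad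
  refine ⟨fun x y => if {x, y} ∈ R then 1 else 0, fun S hSV hSM k hk => hR ?_⟩
  have h_pair : ∀ e ∈ S.powersetCard 2, (e ∈ R ↔ k = 1) := by
    intro e he
    obtain ⟨heS, he2⟩ := mem_powersetCard.1 he
    obtain ⟨x, y, hxy, rfl⟩ := card_eq_two.1 he2
    have hx : x ∈ S := heS (by simp)
    have hy : y ∈ S := heS (by simp)
    rcases hxy.lt_or_gt with hlt | hlt
    · have : (if {x, y} ∈ R then 1 else 0) = k := hk x hx y hy hlt
      split_ifs at this with hR' <;> subst this <;> simp [hR']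
    · have : (if {y, x} ∈ R then 1 else 0) = k := hk y hy x hx hlt
      rw [pair_comm] at this
      split_ifs at this with hR' <;> subst this <;> simp [hR']
  refine mem_filter.2 ⟨hRE, S, mem_powersetCard.2 ⟨hSV, hSM⟩, ?_⟩
  by_cases hk1 : k = 1
  · exact .inl fun e he => (h_pair e he).2 hk1
  · exact .inr (disjoint_left.2 fun e he heR => hk1 ((h_pair e he).1 heR))

section BlockColoring

variable {α ι : Type*} [LinearOrder α] [DecidableEq ι]

def blockColoring (blk : α → ι) (χ : ι → α → α → Fin 2) (x y : α) : Fin 3 :=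
  if blk x = blk y then (χ (blk x) x y).castSucc else Fin.last 2

theorem IsMonochromatic.injOn_or_exists_block {blk : α → ι} {χ : ι → α → α → Fin 2}
    {k : Fin 3} {S : Finset α} (h : IsMonochromatic (blockColoring blk χ) k S) :
    Set.InjOn blk S ∨ ∃ i k', (∀ s ∈ S, blk s = i) ∧ IsMonochromatic (χ i) k' S := by
  by_cases hk : k = Fin.last 2
  · left
    have h_ne : ∀ x ∈ S, ∀ y ∈ S, x < y → blk x ≠ blk y := fun x hx y hy hxy hblk => by
      have := h x hx y hy hxy
      simp only [blockColoring, if_pos hblk, hk] at this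
      exact Fin.castSucc_ne_last _ this
    intro x hx y hy hblk
    by_contra hxy
    rcases lt_or_gt_of_ne hxy with hlt | hlt
    · exact h_ne x hx y hy hlt hblk
    · exact h_ne y hy x hx hlt hblk.symm
  · obtain ⟨k', rfl⟩ := Fin.exists_castSucc_eq.2 hk
    have h_eq : ∀ x ∈ S, ∀ y ∈ S, x < y → blk x = blk y := fun x hx y hy hxy => by
      by_contra hblk
      have := h x hx y hy hxy
      simp only [blockColoring, if_neg hblk] at this
      exact Fin.castSucc_ne_last _ this.symm
    rcases S.eq_empty_or_nonempty with rfl | ⟨s₀, hs₀⟩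
    · simp
    have h_blk : ∀ s ∈ S, blk s = blk s₀ := fun s hs => by
      rcases lt_trichotomy s s₀ with hlt | rfl | hlt
      · exact h_eq s hs s₀ hs₀ hlt
      · rfl
      · exact (h_eq s₀ hs₀ s hs hlt).symm
    refine .inr ⟨blk s₀, k', h_blk, fun x hx y hy hxy => Fin.castSucc_injective _ ?_⟩
    have := h x hx y hy hxy
    rwa [blockColoring, if_pos (h_eq x hx y hy hxy), h_blk x hx] at this

end BlockColoring

def level (s : ℕ) : ℕ := Nat.log 2 (Nat.log 2 s)

theorem two_pow_level_le_log {s : ℕ} (hs : 2 ≤ s) : 2 ^ level s ≤ Nat.log 2 s :=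
  Nat.pow_log_le_self 2 (Nat.log_pos one_lt_two hs).ne'

theorem lt_two_pow_two_pow_level_succ (s : ℕ) : s < 2 ^ 2 ^ (level s + 1) :=
  (Nat.lt_pow_succ_log_self one_lt_two s).trans_le
    (Nat.pow_le_pow_right two_pos (Nat.lt_pow_succ_log_self one_lt_two _))

theorem two_mul_choose_lt_pow {n k : ℕ} (hn : n ≠ 0) (hk : 2 ≤ k) : 2 * n.choose k < n ^ k :=
  calc 2 * n.choose k ≤ k.factorial * n.choose k := by
        gcongr; exact hk.trans (Nat.self_le_factorial k)
    _ = n.descFactorial k := (Nat.descFactorial_eq_factorial_mul_choose n k).symm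
    _ < n ^ k := Nat.descFactorial_lt_pow hn hk

theorem two_mul_choose_level_lt (j : ℕ) :
    2 * (#(range (2 ^ 2 ^ (j + 1)))).choose (4 * 2 ^ j + 1) < 2 ^ (4 * 2 ^ j + 1).choose 2 := by
  set b := 2 ^ j
  have h_exp : (4 * b + 1).choose 2 = 2 ^ (j + 1) * (4 * b + 1) := by
    rw [Nat.choose_two_right, Nat.add_sub_cancel, pow_succ]
    exact Nat.div_eq_of_eq_mul_left two_pos (by ring)
  rw [card_range, h_exp, pow_mul]
  exact two_mul_choose_lt_pow (by positivity) (by have : 0 < b := Nat.two_pow_pos j; omega)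

theorem one_div_logb_le_half_pow_level {s : ℕ} (hs : 2 ≤ s) :
    1 / Real.logb 2 s ≤ (1 / 2) ^ level s := by
  rw [one_div_pow]
  refine one_div_le_one_div_of_le (by positivity) ?_
  have h_log := Real.natLog_le_logb s 2
  push_cast at h_log ⊢
  exact le_trans (by exact_mod_cast two_pow_level_le_log hs) h_log

theorem sum_half_pow_le_two (I : Finset ℕ) : ∑ i ∈ I, (1 / 2 : ℝ) ^ i ≤ 2 :=
  (summable_geometric_two.sum_le_tsum I fun _ _ => by positivity).trans_eq tsum_geometric_two

theorem sum_one_div_logb_le_two_of_injOn {S : Finset ℕ} (hS : ∀ s ∈ S, 2 ≤ s)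
    (hinj : Set.InjOn level S) : ∑ s ∈ S, 1 / Real.logb 2 s ≤ 2 :=
  calc ∑ s ∈ S, 1 / Real.logb 2 s ≤ ∑ s ∈ S, (1 / 2 : ℝ) ^ level s :=
        sum_le_sum fun s hs => one_div_logb_le_half_pow_level (hS s hs)
    _ = ∑ i ∈ S.image level, (1 / 2 : ℝ) ^ i := (sum_image hinj).symm
    _ ≤ 2 := sum_half_pow_le_two _

theorem sum_one_div_logb_le_four_of_level_eq {S : Finset ℕ} {j : ℕ} (hS : ∀ s ∈ S, 2 ≤ s)
    (hj : ∀ s ∈ S, level s = j) (hcard : #S ≤ 4 * 2 ^ j) : ∑ s ∈ S, 1 / Real.logb 2 s ≤ 4 :=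
  calc ∑ s ∈ S, 1 / Real.logb 2 s ≤ #S • (1 / 2 : ℝ) ^ j :=
        sum_le_card_nsmul _ _ _ fun s hs => hj s hs ▸ one_div_logb_le_half_pow_level (hS s hs)
    _ ≤ (4 * 2 ^ j : ℕ) * (1 / 2 : ℝ) ^ j := by rw [nsmul_eq_mul]; gcongr
    _ = 4 := by push_cast; rw [mul_assoc, ← mul_pow]; norm_num

end WeightedRamsey

open WeightedRamsey

/-- For all sufficiently large `n` there is a 3-coloring of the edges of
the complete graph on `{2, ..., n}` in which every monochromatic clique `S` satisfies
`∑_{s ∈ S} 1 / log₂ s ≤ 4`. -/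
theorem weighted_ramsey_three_colors_bounded :
    ∃ N : ℕ, ∀ n : ℕ, N ≤ n →
      ∃ c : ℕ → ℕ → Fin 3,
        ∀ S : Finset ℕ, S ⊆ Finset.Icc 2 n →
          (∃ clr : Fin 3, ∀ i ∈ S, ∀ j ∈ S, i < j → c i j = clr) →
          ∑ s ∈ S, 1 / Real.logb 2 (s : ℝ) ≤ 4 := by
  choose χ hχ using fun j =>
    exists_coloring_forall_not_isMonochromatic _ _ (two_mul_choose_level_lt j)
  refine ⟨0, fun n _ => ⟨blockColoring level χ, fun S hS ⟨k, hk⟩ => ?_⟩⟩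
  have hS2 : ∀ s ∈ S, 2 ≤ s := fun s hs => (mem_Icc.1 (hS hs)).1
  rcases IsMonochromatic.injOn_or_exists_block hk with hinj | ⟨j, k', hj, hmono⟩
  · exact (sum_one_div_logb_le_two_of_injOn hS2 hinj).trans (by norm_num)
  · have hSV : S ⊆ range (2 ^ 2 ^ (j + 1)) := fun s hs =>
      mem_range.2 (hj s hs ▸ lt_two_pow_two_pow_level_succ s)
    exact sum_one_div_logb_le_four_of_level_eq hS2 hj
      (Nat.lt_succ_iff.1 (card_lt_of_isMonochromatic (hχ j) hSV hmono))
end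

section
/- Suppose p > 0 is a real number and s, t, m, N₁, N₂ are positive integers satisfying C(N₁, s) · (m/N₂)^t ≤ p^t · N₁ / 2, where C(N₁, s) is the binomial coefficient. If G = (V₁, V₂, E) is a bipartite graph with |V₁| = N₁, |V₂| = N₂ and at least p·N₁·N₂ edges, then G has a vertex subset U ⊆ V₁ such that |U| ≥ p^t · N₁ / 2 and every s vertices in U have at least m common neighbors in V₂. -/
/-!
Choose `t` vertices `w₁, …, wₜ` of `V₂` uniformly at random with repetition and let `A` be their
common neighbourhood in `V₁`. By convexity `𝔼|A| = ∑ᵥ (deg v / N₂)^t ≥ p^t N₁`, while an `s`-set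
`T` with fewer than `m` common neighbours lies in `A` with probability
`(|N(T)| / N₂)^t < (m / N₂)^t`, so `A` contains on average at most
`C(N₁, s) (m / N₂)^t ≤ p^t N₁ / 2` such bad sets. For an outcome
with `|A| - #bad ≥ p^t N₁ / 2`, deleting one vertex from each bad set inside `A` leaves `U`.
The expectations are computed by counting over all `N₂^t` tuples.
-/

open Finset

section Counting

variable {ι κ α β : Type*} [Fintype κ] [DecidableEq κ]

theorem filter_piFinset_const_forall (V : Finset β) (P : β → Prop) [DecidablePred P] :
    {w ∈ Fintype.piFinset fun _ : κ => V | ∀ j, P (w j)} =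
      Fintype.piFinset fun _ : κ => {y ∈ V | P y} := by
  ext w
  simp [forall_and]

theorem sum_card_filter_forall_eq_sum_card_pow (I : Finset ι) (V : Finset β)
    (P : ι → β → Prop) [∀ i y, Decidable (P i y)] :
    ∑ w ∈ Fintype.piFinset (fun _ : κ => V), #{i ∈ I | ∀ j, P i (w j)} =
      ∑ i ∈ I, #{y ∈ V | P i y} ^ Fintype.card κ := by
  refine (sum_card_bipartiteAbove_eq_sum_card_bipartiteBelow
    (fun (w : κ → β) i => ∀ j, P i (w j)) (s := Fintype.piFinset fun _ : κ => V) (t := I)).trans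
    (sum_congr rfl fun i _ => ?_)
  rw [bipartiteBelow, filter_piFinset_const_forall, Fintype.card_piFinset, prod_const, card_univ]

theorem pow_mul_card_le_sum_pow {s : Finset ι} {f : ι → ℝ} {c : ℝ} (hc : 0 ≤ c)
    (hf : ∀ i ∈ s, 0 ≤ f i) (h : c * #s ≤ ∑ i ∈ s, f i) (n : ℕ) :
    c ^ n * #s ≤ ∑ i ∈ s, f i ^ n := by
  rcases n with _ | n
  · simp
  obtain rfl | hs := s.eq_empty_or_nonempty
  · simp
  refine le_of_mul_le_mul_left ?_ (by positivity : (0 : ℝ) < #s ^ n)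
  calc #s ^ n * (c ^ (n + 1) * #s) = (c * #s) ^ (n + 1) := by ring
    _ ≤ (∑ i ∈ s, f i) ^ (n + 1) := by gcongr
    _ ≤ #s ^ n * ∑ i ∈ s, f i ^ (n + 1) := pow_sum_le_card_mul_sum_pow hf n

theorem exists_subset_card_le_card_add_card_forall_not_subset [DecidableEq α] (X : Finset α)
    (B : Finset (Finset α)) (hB : ∀ S ∈ B, S.Nonempty) :
    ∃ U ⊆ X, #X ≤ #U + #B ∧ ∀ S ∈ B, ¬ S ⊆ U := by
  choose pick hpick using hB
  let D := B.attach.image fun S => pick S.1 S.2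
  refine ⟨X \ D, sdiff_subset, ?_, fun S hS hSU => ?_⟩
  · calc #X ≤ #(X \ D) + #D := card_le_card_sdiff_add_card
      _ ≤ #(X \ D) + #B := by grw [card_image_le, card_attach]
  · have := hSU (hpick S hS)
    exact (mem_sdiff.1 this).2 (mem_image_of_mem _ (mem_attach _ ⟨S, hS⟩))

end Counting

section Bipartite

variable {κ α β : Type*} [Fintype κ]
  (V₁ : Finset α) (V₂ : Finset β) (E : α → β → Prop) [∀ a b, Decidable (E a b)]

def commonNbhd (T : Finset α) : Finset β := {w ∈ V₂ | ∀ v ∈ T, E v w}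

def tupleCommonNbhd (w : κ → β) : Finset α := {v ∈ V₁ | ∀ j, E v (w j)}

theorem tupleCommonNbhd_subset (w : κ → β) : tupleCommonNbhd V₁ E w ⊆ V₁ :=
  filter_subset _ _

def badSets (s m : ℕ) : Finset (Finset α) :=
  {T ∈ V₁.powersetCard s | #(commonNbhd V₂ E T) < m}

variable {V₁ V₂ E} in
theorem mem_badSets {s m : ℕ} {T : Finset α} :
    T ∈ badSets V₁ V₂ E s m ↔ T ⊆ V₁ ∧ #T = s ∧ #(commonNbhd V₂ E T) < m := by
  simp [badSets, mem_powersetCard, and_assoc]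

theorem sum_card_tupleCommonNbhd [DecidableEq κ] :
    ∑ w ∈ Fintype.piFinset (fun _ : κ => V₂), #(tupleCommonNbhd V₁ E w) =
      ∑ v ∈ V₁, #{y ∈ V₂ | E v y} ^ Fintype.card κ :=
  sum_card_filter_forall_eq_sum_card_pow V₁ V₂ E

theorem sum_card_filter_subset_tupleCommonNbhd [DecidableEq κ] [DecidableEq α]
    (F : Finset (Finset α)) (hF : ∀ T ∈ F, T ⊆ V₁) :
    ∑ w ∈ Fintype.piFinset (fun _ : κ => V₂), #{T ∈ F | T ⊆ tupleCommonNbhd V₁ E w} =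
      ∑ T ∈ F, #(commonNbhd V₂ E T) ^ Fintype.card κ := by
  refine .trans (sum_congr rfl fun w _ => congrArg card (filter_congr fun T hT => ?_))
    (sum_card_filter_forall_eq_sum_card_pow F V₂ fun T y => ∀ v ∈ T, E v y)
  simp only [tupleCommonNbhd, subset_iff, mem_filter]
  exact ⟨fun h j v hv => (h hv).2 j, fun h v hv => ⟨hF T hT hv, fun j => h j v hv⟩⟩

theorem sum_card_commonNbhd_pow_badSets_le (s m n : ℕ) :
    ∑ T ∈ badSets V₁ V₂ E s m, (#(commonNbhd V₂ E T) : ℝ) ^ n ≤ (#V₁).choose s * m ^ n := by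
  calc ∑ T ∈ badSets V₁ V₂ E s m, (#(commonNbhd V₂ E T) : ℝ) ^ n
      ≤ ∑ _T ∈ badSets V₁ V₂ E s m, (m : ℝ) ^ n := by
        gcongr with T hT
        exact_mod_cast (mem_badSets.1 hT).2.2.le
    _ = #(badSets V₁ V₂ E s m) * (m : ℝ) ^ n := by rw [sum_const, nsmul_eq_mul]
    _ ≤ (#V₁).choose s * m ^ n := by
        gcongr
        rw [← card_powersetCard]
        exact_mod_cast card_filter_le _ _

theorem exists_add_card_filter_subset_le_card_tupleCommonNbhd [DecidableEq κ] [DecidableEq α]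
    (hV₂ : V₂.Nonempty) (F : Finset (Finset α)) (hF : ∀ T ∈ F, T ⊆ V₁) (a : ℝ)
    (h : a * #V₂ ^ Fintype.card κ + ∑ T ∈ F, (#(commonNbhd V₂ E T) : ℝ) ^ Fintype.card κ ≤
      ∑ v ∈ V₁, (#{y ∈ V₂ | E v y} : ℝ) ^ Fintype.card κ) :
    ∃ w : κ → β,
      a + #{T ∈ F | T ⊆ tupleCommonNbhd V₁ E w} ≤ #(tupleCommonNbhd V₁ E w) := by
  have hsum : ∑ _w ∈ Fintype.piFinset (fun _ : κ => V₂), a ≤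
      ∑ w ∈ Fintype.piFinset (fun _ : κ => V₂),
        ((#(tupleCommonNbhd V₁ E w) : ℝ) - #{T ∈ F | T ⊆ tupleCommonNbhd V₁ E w}) := by
    rw [sum_sub_distrib, sum_const, nsmul_eq_mul, Fintype.card_piFinset, prod_const, card_univ]
    have h₁ := sum_card_tupleCommonNbhd V₁ V₂ E (κ := κ)
    have h₂ := sum_card_filter_subset_tupleCommonNbhd V₁ V₂ E (κ := κ) F hF
    rw [← Nat.cast_inj (R := ℝ)] at h₁ h₂
    push_cast at h₁ h₂
    rw [h₁, h₂]
    push_cast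
    linarith
  obtain ⟨w, -, hw⟩ := exists_le_of_sum_le (Fintype.piFinset_nonempty.2 fun _ => hV₂) hsum
  exact ⟨w, by linarith⟩

end Bipartite

theorem dependent_random_choice_general {α β : Type*}
    (p : ℝ) (hp : 0 < p) (s t m N₁ N₂ : ℕ)
    (hs : 0 < s) (hN₂ : 0 < N₂)
    (hcond : (N₁.choose s : ℝ) * ((m : ℝ) / (N₂ : ℝ)) ^ t ≤ p ^ t * N₁ / 2)
    (V₁ : Finset α) (V₂ : Finset β) (E : α → β → Prop) [∀ a b, Decidable (E a b)]
    (hV₁ : V₁.card = N₁) (hV₂ : V₂.card = N₂)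
    (hedges : p * N₁ * N₂ ≤ ∑ v ∈ V₁, ((V₂.filter fun w => E v w).card : ℝ)) :
    ∃ U : Finset α, U ⊆ V₁ ∧ p ^ t * N₁ / 2 ≤ (U.card : ℝ) ∧
      ∀ T : Finset α, T ⊆ U → T.card = s →
        m ≤ (V₂.filter fun w => ∀ v ∈ T, E v w).card := by
  classical
  subst hV₁ hV₂
  have hdeg := pow_mul_card_le_sum_pow (c := p * #V₂) (by positivity)
    (fun v _ => Nat.cast_nonneg #{w ∈ V₂ | E v w}) (by linarith) t
  have hbad := sum_card_commonNbhd_pow_badSets_le V₁ V₂ E s m t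
  rw [div_pow, mul_div_assoc', div_le_iff₀ (by positivity)] at hcond
  rw [mul_pow] at hdeg
  obtain ⟨w, hw⟩ := exists_add_card_filter_subset_le_card_tupleCommonNbhd (κ := Fin t)
    V₁ V₂ E (card_pos.1 hN₂) (badSets V₁ V₂ E s m) (fun T hT => (mem_badSets.1 hT).1)
    (p ^ t * #V₁ / 2) (by rw [Fintype.card_fin]; linarith)
  set bad := {T ∈ badSets V₁ V₂ E s m | T ⊆ tupleCommonNbhd V₁ E w}
  obtain ⟨U, hUA, hUcard, hU⟩ := exists_subset_card_le_card_add_card_forall_not_subset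
    (tupleCommonNbhd V₁ E w) bad
    fun T hT => card_pos.1 ((mem_badSets.1 (mem_filter.1 hT).1).2.1 ▸ hs)
  refine ⟨U, hUA.trans (tupleCommonNbhd_subset V₁ E w), ?_, fun T hTU hTs => ?_⟩
  · have : (#(tupleCommonNbhd V₁ E w) : ℝ) ≤ #U + #bad := by exact_mod_cast hUcard
    linarith
  · by_contra! hlt
    have hTA := hTU.trans hUA
    have hTV := hTA.trans (tupleCommonNbhd_subset V₁ E w)
    exact hU T (mem_filter.2 ⟨mem_badSets.2 ⟨hTV, hTs, hlt⟩, hTA⟩) hTU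

/-- Dependent random choice, Lemma 2.1.
If `p > 0` and `s, t, m, N₁, N₂` are positive integers with
`C(N₁, s) · (m / N₂)^t ≤ p^t · N₁ / 2`, then every bipartite graph `G = (V₁, V₂, E)` with
`|V₁| = N₁`, `|V₂| = N₂` and at least `p · N₁ · N₂` edges contains a subset `U ⊆ V₁` with
`|U| ≥ p^t · N₁ / 2` such that every `s` vertices of `U` have at least `m` common
neighbors in `V₂`. -/
theorem dependent_random_choice {α β : Type*} [DecidableEq α] [DecidableEq β]
    (p : ℝ) (hp : 0 < p) (s t m N₁ N₂ : ℕ)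
    (hs : 0 < s) (ht : 0 < t) (hm : 0 < m) (hN₁ : 0 < N₁) (hN₂ : 0 < N₂)
    (hcond : (N₁.choose s : ℝ) * ((m : ℝ) / (N₂ : ℝ)) ^ t ≤ p ^ t * N₁ / 2)
    (V₁ : Finset α) (V₂ : Finset β) (E : α → β → Prop) [∀ a b, Decidable (E a b)]
    (hV₁ : V₁.card = N₁) (hV₂ : V₂.card = N₂)
    (hedges : p * N₁ * N₂ ≤ ∑ v ∈ V₁, ((V₂.filter fun w => E v w).card : ℝ)) :
    ∃ U : Finset α, U ⊆ V₁ ∧ p ^ t * N₁ / 2 ≤ (U.card : ℝ) ∧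
      ∀ T : Finset α, T ⊆ U → T.card = s →
        m ≤ (V₂.filter fun w => ∀ v ∈ T, E v w).card :=
  dependent_random_choice_general p hp s t m N₁ N₂ hs hN₂ hcond V₁ V₂ E hV₁ hV₂ hedges
end

section
/- Suppose that the edges of the complete graph on n vertices have been 2-colored in red and blue and that each vertex v has been assigned positive real weights r_v and b_v satisfying: b_v ≥ ln(4/r_v) whenever r_v ≤ b_v, and r_v ≥ ln(4/b_v) whenever b_v ≤ r_v. Then there exists either a red clique K with ∑_{v ∈ K} r_v ≥ (1/2)·ln n or a blue clique L with ∑_{v ∈ L} b_v ≥ (1/2)·ln n. -/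
/-!
Weighted version of the Erdős–Szekeres induction: every vertex set `S` contains a red clique `K`
and a blue clique `L` with `log |S| ≤ r(K) + b(L)`. Pick `v ∈ S`. If `log |S| ≤ r v + b v`, take
`K = L = {v}`. Otherwise the weight conditions give `1/|S| + e^{-r v} + e^{-b v} ≤ 1`, so among the
`|S| - 1` other vertices either at least `|S| e^{-r v}` are red neighbours of `v` or at least
`|S| e^{-b v}` are blue ones; recursing into that neighbourhood and adding `v` to the clique of its
colour loses at most `r v` (resp. `b v`) on the logarithmic side.
-/

open Finset Real

section Cliques

variable {α : Type*} [LinearOrder α] (c : α → α → Bool)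

/-- The colouring `c` is only read on pairs `u < v`; this is the colour of the edge `uv`. -/
def edgeColor (u v : α) : Bool := if u < v then c u v else c v u

def IsMonoClique (x : Bool) (K : Finset α) : Prop :=
  ∀ i ∈ K, ∀ j ∈ K, i < j → c i j = x

def colorNbhd (x : Bool) (v : α) (S : Finset α) : Finset α :=
  (S.erase v).filter fun u => edgeColor c v u = x

variable {c}

theorem isMonoClique_empty (x : Bool) : IsMonoClique c x ∅ := by
  simp [IsMonoClique]

theorem isMonoClique_singleton (x : Bool) (v : α) : IsMonoClique c x {v} := by
  simp [IsMonoClique]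

theorem colorNbhd_subset (x : Bool) (v : α) (S : Finset α) : colorNbhd c x v S ⊆ S.erase v :=
  filter_subset _ _

theorem notMem_colorNbhd (x : Bool) (v : α) (S : Finset α) : v ∉ colorNbhd c x v S :=
  fun h => notMem_erase v S (colorNbhd_subset x v S h)

theorem colorNbhd_ssubset (x : Bool) {v : α} {S : Finset α} (hv : v ∈ S) :
    colorNbhd c x v S ⊂ S :=
  (colorNbhd_subset x v S).trans_ssubset (erase_ssubset hv)

theorem card_colorNbhd_add_card_colorNbhd {v : α} {S : Finset α} (hv : v ∈ S) :
    #(colorNbhd c true v S) + #(colorNbhd c false v S) + 1 = #S := by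
  simp only [colorNbhd, Bool.eq_false_iff, ne_eq]
  rw [card_filter_add_card_filter_not, card_erase_add_one hv]

theorem IsMonoClique.insert_of_subset_colorNbhd {x : Bool} {v : α} {K S : Finset α}
    (hK : IsMonoClique c x K) (hKN : K ⊆ colorNbhd c x v S) :
    IsMonoClique c x (insert v K) := by
  have hcolor : ∀ u ∈ K, edgeColor c v u = x := fun u hu => (mem_filter.1 (hKN hu)).2
  intro i hi j hj hij
  rcases mem_insert.1 hi with hiv | hiK <;> rcases mem_insert.1 hj with hjv | hjK
  · subst hiv hjv
    exact absurd hij (lt_irrefl _)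
  · subst hiv
    simpa [edgeColor, hij] using hcolor j hjK
  · subst hjv
    simpa [edgeColor, hij.not_gt] using hcolor i hiK
  · exact hK i hiK j hjK hij

end Cliques

theorem log_le_add_log_or_log_le_add_log {m p q r b : ℝ} (hm : 0 < m) (hpq : p + q + 1 = m)
    (h : m⁻¹ + exp (-r) + exp (-b) ≤ 1) :
    log m ≤ r + log p ∨ log m ≤ b + log q := by
  have hpig : m * exp (-r) ≤ p ∨ m * exp (-b) ≤ q := by
    by_contra! hc
    have : 1 + m * exp (-r) + m * exp (-b) ≤ m := by
      have := mul_le_mul_of_nonneg_left h hm.le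
      rwa [mul_add, mul_add, mul_inv_cancel₀ hm.ne', mul_one] at this
    linarith
  have log_mul_exp (w : ℝ) : log (m * exp (-w)) = log m - w := by
    rw [log_mul hm.ne' (exp_pos _).ne', log_exp]; ring
  rcases hpig with hp | hq
  · have := log_le_log (by positivity) hp
    rw [log_mul_exp] at this
    exact Or.inl (by linarith)
  · have := log_le_log (by positivity) hq
    rw [log_mul_exp] at this
    exact Or.inr (by linarith)

theorem exists_isMonoClique_log_card_le {α : Type*} [LinearOrder α] (c : α → α → Bool)
    (r b : α → ℝ)
    (hweight : ∀ v (m : ℝ), 0 < m → r v + b v < log m → m⁻¹ + exp (-r v) + exp (-b v) ≤ 1)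
    (S : Finset α) :
    ∃ K ⊆ S, ∃ L ⊆ S, IsMonoClique c true K ∧ IsMonoClique c false L ∧
      log #S ≤ ∑ v ∈ K, r v + ∑ v ∈ L, b v := by
  induction S using Finset.strongInduction with
  | H S ih =>
  rcases S.eq_empty_or_nonempty with rfl | ⟨v, hv⟩
  · exact ⟨∅, empty_subset _, ∅, empty_subset _, isMonoClique_empty _, isMonoClique_empty _,
      by simp⟩
  have hvS : {v} ⊆ S := singleton_subset_iff.2 hv
  by_cases hsmall : log #S ≤ r v + b v
  · exact ⟨{v}, hvS, {v}, hvS, isMonoClique_singleton _ _, isMonoClique_singleton _ _,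
      by simpa using hsmall⟩
  rw [not_le] at hsmall
  have hm : (0 : ℝ) < #S := by exact_mod_cast card_pos.2 ⟨v, hv⟩
  have hcard : (#(colorNbhd c true v S) : ℝ) + #(colorNbhd c false v S) + 1 = #S := by
    exact_mod_cast card_colorNbhd_add_card_colorNbhd hv
  have hN (x : Bool) : colorNbhd c x v S ⊆ S := (colorNbhd_subset x v S).trans (erase_subset v S)
  rcases log_le_add_log_or_log_le_add_log hm hcard (hweight v _ hm hsmall) with hred | hblue
  · obtain ⟨K, hKN, L, hLN, hK, hL, hsum⟩ := ih _ (colorNbhd_ssubset true hv)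
    refine ⟨insert v K, insert_subset hv (hKN.trans (hN true)), L, hLN.trans (hN true),
      hK.insert_of_subset_colorNbhd hKN, hL, ?_⟩
    rw [sum_insert fun h => notMem_colorNbhd true v S (hKN h)]
    linarith
  · obtain ⟨K, hKN, L, hLN, hK, hL, hsum⟩ := ih _ (colorNbhd_ssubset false hv)
    refine ⟨K, hKN.trans (hN false), insert v L, insert_subset hv (hLN.trans (hN false)),
      hK, hL.insert_of_subset_colorNbhd hLN, ?_⟩
    rw [sum_insert fun h => notMem_colorNbhd false v S (hLN h)]
    linarith

theorem inv_add_exp_neg_add_exp_neg_le_one {m r b : ℝ} (hm : 0 < m) (hr : 0 < r) (hrb : r ≤ b)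
    (hb : log (4 / r) ≤ b) (hlog : r + b < log m) :
    m⁻¹ + exp (-r) + exp (-b) ≤ 1 := by
  have hexp_b : exp (-b) ≤ r / 4 := by
    have : 4 / r ≤ exp b := (log_le_iff_le_exp (by positivity)).1 hb
    rw [exp_neg, ← inv_div]
    exact inv_anti₀ (by positivity) this
  have hm_inv : m⁻¹ < exp (-(r + b)) := by
    rw [exp_neg]
    exact inv_strictAnti₀ (exp_pos _) ((lt_log_iff_exp_lt hm).1 hlog)
  rcases le_total r 1 with hr1 | hr1
  · -- `1/m < e^{-b} ≤ r/4` and `e^{-r} ≤ 1 - r/2` on `[0, 1]`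
    have hexp_r : exp (-r) ≤ 1 - r / 2 := by
      rw [exp_neg, inv_le_iff_one_le_mul₀' (exp_pos r)]
      nlinarith [add_one_le_exp r]
    have : exp (-(r + b)) ≤ exp (-b) := exp_le_exp.2 (by linarith)
    linarith
  · -- `1/m < e^{-r} e^{-b}`, so the sum is below `(1 + e^{-1})^2 - 1 < 1`
    have he : exp (-1) < 0.4 := by
      rw [exp_neg, inv_lt_comm₀ (exp_pos 1) (by norm_num)]
      linarith [exp_one_gt_d9]
    have hx : exp (-r) ≤ exp (-1) := exp_le_exp.2 (by linarith)
    have hy : exp (-b) ≤ exp (-1) := exp_le_exp.2 (by linarith)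
    rw [neg_add, exp_add] at hm_inv
    nlinarith [exp_pos (-r), exp_pos (-b)]

/-- Weighted Ramsey theorem, Lemma 3.2.
If the edges of `K_n` are 2-colored and each vertex `v` carries positive weights `r v`,
`b v` with `b v ≥ ln (4 / r v)` whenever `r v ≤ b v` and `r v ≥ ln (4 / b v)` whenever
`b v ≤ r v`, then there is a red clique `K` with `∑_{v ∈ K} r v ≥ (1/2) ln n` or a blue
clique `L` with `∑_{v ∈ L} b v ≥ (1/2) ln n`. -/
theorem weighted_ramsey (n : ℕ) (c : Fin n → Fin n → Bool)
    (r b : Fin n → ℝ) (hr : ∀ v, 0 < r v) (hb : ∀ v, 0 < b v)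
    (hrb : ∀ v, r v ≤ b v → Real.log (4 / r v) ≤ b v)
    (hbr : ∀ v, b v ≤ r v → Real.log (4 / b v) ≤ r v) :
    (∃ K : Finset (Fin n), (∀ i ∈ K, ∀ j ∈ K, i < j → c i j = true) ∧
      (1 / 2) * Real.log n ≤ ∑ v ∈ K, r v) ∨
    (∃ L : Finset (Fin n), (∀ i ∈ L, ∀ j ∈ L, i < j → c i j = false) ∧
      (1 / 2) * Real.log n ≤ ∑ v ∈ L, b v) := by
  have hweight (v : Fin n) (m : ℝ) (hm : 0 < m) (hlog : r v + b v < log m) :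
      m⁻¹ + exp (-r v) + exp (-b v) ≤ 1 := by
    rcases le_total (r v) (b v) with h | h
    · exact inv_add_exp_neg_add_exp_neg_le_one hm (hr v) h (hrb v h) hlog
    · have := inv_add_exp_neg_add_exp_neg_le_one hm (hb v) h (hbr v h) (by linarith)
      linarith
  obtain ⟨K, -, L, -, hK, hL, hsum⟩ := exists_isMonoClique_log_card_le c r b hweight univ
  rw [card_univ, Fintype.card_fin] at hsum
  rcases le_total (∑ v ∈ K, r v) (∑ v ∈ L, b v) with h | h
  · exact Or.inr ⟨L, hL, by linarith⟩
  · exact Or.inl ⟨K, hK, by linarith⟩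
end

section
/- Let S be a finite set of integers with |S| ≥ 6 and let I = [a, b] be an interval of integers with S ⊆ I. Then there exist subsets T₁, T₂ ⊆ S and intervals of integers I₁, I₂ with T₁ ⊆ I₁ and T₂ ⊆ I₂ such that the ordered pair (T₁, T₂) is separated, and for j = 1, 2 one has d_{I_j}(T_j) ≥ d_I(S)/2 and |I_j| ≥ |S|/12. -/
/-- An ordered pair `(T₁, T₂)` of (nonempty, finite) sets of integers is *separated* if,
for `j = 1, 2`, `min(T₂) - max(T₁) > max(T_j) - min(T_j)`. -/
def Separated (T₁ T₂ : Finset ℤ) : Prop :=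
  ∃ h₁ : T₁.Nonempty, ∃ h₂ : T₂.Nonempty,
    T₁.max' h₁ - T₁.min' h₁ < T₂.min' h₂ - T₁.max' h₁ ∧
    T₂.max' h₂ - T₂.min' h₂ < T₂.min' h₂ - T₁.max' h₁

/-- The density `d_I(S) = |S| / |I|` of a finite set `S` of integers with respect to a
finite set (interval) `I` containing it. -/
noncomputable def dens (I S : Finset ℤ) : ℝ := (S.card : ℝ) / (I.card : ℝ)

/-!
Let `n = |S|`, `L = |I|` and `q = ⌈n/12⌉`. If `nq ≤ 2L`, the two extreme points of `S`, each
padded to an interval of length `q`, already work. Otherwise take a shortest interval `J` with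
`|S ∩ J|² / |J| ≥ n² / L`. Then `S ∩ J` has density at least `n / L` in `J` and at least
`n² / L ≥ 14` points, and each outer third of `J` holds at least a sixth of them: removing a third
with fewer would leave a shorter interval with the same property. The two outer thirds are
separated by the middle one and have density at least `n / 2L` in windows of length `⌊|J|/3⌋`,
padded to length `q` when shorter.
-/

section

open Finset hiding dens

lemma Separated.of_subset_Icc {T₁ T₂ : Finset ℤ} {u₁ v₁ u₂ v₂ : ℤ} (h₁ : T₁.Nonempty)
    (h₂ : T₂.Nonempty) (hT₁ : T₁ ⊆ Icc u₁ v₁) (hT₂ : T₂ ⊆ Icc u₂ v₂)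
    (hgap₁ : v₁ - u₁ < u₂ - v₁) (hgap₂ : v₂ - u₂ < u₂ - v₁) : Separated T₁ T₂ := by
  have hmin₁ := mem_Icc.mp (hT₁ (T₁.min'_mem h₁))
  have hmax₁ := mem_Icc.mp (hT₁ (T₁.max'_mem h₁))
  have hmin₂ := mem_Icc.mp (hT₂ (T₂.min'_mem h₂))
  have hmax₂ := mem_Icc.mp (hT₂ (T₂.max'_mem h₂))
  exact ⟨h₁, h₂, by omega, by omega⟩

lemma Int.card_Icc_add_sub_one (u : ℤ) (k : ℕ) : (Icc u (u + k - 1)).card = k := by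
  simp [Int.card_Icc]

lemma card_inter_Icc_add_card_inter_Icc (S : Finset ℤ) {u c v : ℤ} (huc : u ≤ c)
    (hcv : c ≤ v + 1) :
    (S ∩ Icc u (c - 1)).card + (S ∩ Icc c v).card = (S ∩ Icc u v).card := by
  rw [← card_union_of_disjoint, ← inter_union_distrib_left]
  · congr 2; ext x; simp only [mem_union, mem_Icc]; omega
  · refine disjoint_left.mpr fun x hx hx' => ?_
    simp only [mem_inter, mem_Icc] at hx hx'
    omega

/-- `T ⊆ [u, v]`, and `T` has density at least `n / 2L` in every interval of length
`max |[u, v]| q`. -/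
def HasHalfDenseWindow (n L q : ℕ) (T : Finset ℤ) : Prop :=
  ∃ u v : ℤ, T ⊆ Icc u v ∧ n * (Icc u v).card ≤ 2 * L * T.card ∧ n * q ≤ 2 * L * T.card

lemma HasHalfDenseWindow.exists_Icc {n L q : ℕ} {T : Finset ℤ} (hT : HasHalfDenseWindow n L q T)
    (hL : 0 < L) (hq₀ : 0 < q) (hq : n ≤ 12 * q) :
    ∃ a b : ℤ, T ⊆ Icc a b ∧ (n : ℝ) / L / 2 ≤ dens (Icc a b) T ∧
      (n : ℝ) / 12 ≤ (Icc a b).card := by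
  obtain ⟨u, v, hTuv, hwin, hlen⟩ := hT
  set ℓ := max (Icc u v).card q
  have hℓ : 0 < ℓ := lt_max_of_lt_right hq₀
  have hnℓ : n * ℓ ≤ 2 * L * T.card := by
    rw [mul_max_of_nonneg _ _ n.zero_le]
    exact max_le hwin hlen
  refine ⟨u, u + ℓ - 1, fun x hx => ?_, ?_, ?_⟩
  · have hx := mem_Icc.mp (hTuv hx)
    have hvℓ : (Icc u v).card ≤ ℓ := le_max_left _ _
    rw [Int.card_Icc] at hvℓ
    rw [mem_Icc]
    omega
  · rw [_root_.dens, Int.card_Icc_add_sub_one, div_div,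
      div_le_div_iff₀ (by positivity) (by positivity)]
    exact_mod_cast (by linarith : n * ℓ ≤ T.card * (L * 2))
  · have hqℓ : q ≤ ℓ := le_max_right _ _
    rw [Int.card_Icc_add_sub_one, div_le_iff₀ (by norm_num)]
    exact_mod_cast (by omega : n ≤ ℓ * 12)

/-- With `m = |S ∩ [u, v]|` and `n = |S|`: `m² / |[u, v]| ≥ n² / L`. Unlike the density bound
`m / |[u, v]| ≥ n / L`, which it implies, this survives cutting off a third of `[u, v]` that
holds fewer than `m / 6` points. -/
def IsHeavy (S : Finset ℤ) (L : ℕ) (u v : ℤ) : Prop :=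
  0 < (S ∩ Icc u v).card ∧ S.card ^ 2 * (Icc u v).card ≤ (S ∩ Icc u v).card ^ 2 * L

lemma sq_mul_le_of_trim {n L m Λ m' Λ' : ℕ} (hm : 14 ≤ m) (hmΛ : m ≤ Λ)
    (hm' : 5 * m < 6 * m') (hΛ' : 3 * Λ' ≤ 2 * Λ + 2) (h : n ^ 2 * Λ ≤ m ^ 2 * L) :
    n ^ 2 * Λ' ≤ m' ^ 2 * L := by
  have hsq : n ^ 2 ≤ m * L := by
    refine Nat.le_of_mul_le_mul_left ?_ (by omega : 0 < m)
    calc m * n ^ 2 ≤ n ^ 2 * Λ := by rw [mul_comm]; gcongr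
      _ ≤ m * (m * L) := by linarith
  -- `36 m'² ≥ (5m + 1)² ≥ 25 m² + 10 m` against `36 Λ' ≤ 24 Λ + 24`: this needs `14 m ≤ m²`.
  have hm'sq : (5 * m + 1) ^ 2 ≤ (6 * m') ^ 2 := by gcongr; omega
  nlinarith

namespace IsHeavy

variable {S : Finset ℤ} {L : ℕ} {u v : ℤ}

lemma sq_le_card_mul (h : IsHeavy S L u v) : S.card ^ 2 ≤ (S ∩ Icc u v).card * L := by
  refine Nat.le_of_mul_le_mul_left ?_ h.1
  calc (S ∩ Icc u v).card * S.card ^ 2 ≤ S.card ^ 2 * (Icc u v).card := by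
        rw [mul_comm]; gcongr; exact inter_subset_right
    _ ≤ _ := by linarith [h.2]

lemma card_mul_le (h : IsHeavy S L u v) : S.card * (Icc u v).card ≤ (S ∩ Icc u v).card * L := by
  have hn : (S ∩ Icc u v).card ≤ S.card := card_le_card inter_subset_left
  refine Nat.le_of_mul_le_mul_left ?_ (h.1.trans_le hn)
  calc S.card * (S.card * (Icc u v).card) = S.card ^ 2 * (Icc u v).card := by ring
    _ ≤ (S ∩ Icc u v).card ^ 2 * L := h.2
    _ = (S ∩ Icc u v).card * ((S ∩ Icc u v).card * L) := by ring
    _ ≤ S.card * ((S ∩ Icc u v).card * L) := by gcongr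

lemma fourteen_le {q : ℕ} (h : IsHeavy S L u v) (hq : 12 * q ≤ S.card + 11)
    (hdense : 2 * L < S.card * q) : 14 ≤ (S ∩ Icc u v).card := by
  have hn : (S ∩ Icc u v).card ≤ S.card := card_le_card inter_subset_left
  have hsq := h.sq_le_card_mul
  have hnL : S.card ≤ L := by nlinarith
  nlinarith

lemma of_trim {c d : ℤ} (h : IsHeavy S L u v) (h14 : 14 ≤ (S ∩ Icc u v).card)
    (hm : 5 * (S ∩ Icc u v).card < 6 * (S ∩ Icc c d).card)
    (hΛ : 3 * (Icc c d).card ≤ 2 * (Icc u v).card + 2) : IsHeavy S L c d :=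
  ⟨by omega, sq_mul_le_of_trim h14 (card_le_card inter_subset_right) hm hΛ h.2⟩

lemma hasHalfDenseWindow {T : Finset ℤ} {q : ℕ} {c d : ℤ} (h : IsHeavy S L u v)
    (hq : 3 * q ≤ S.card) (hT : T ⊆ Icc c d) (hw : 3 * (Icc c d).card ≤ (Icc u v).card)
    (hm : (S ∩ Icc u v).card ≤ 6 * T.card) : HasHalfDenseWindow S.card L q T := by
  have hmL : (S ∩ Icc u v).card * L ≤ 3 * (2 * L * T.card) := by nlinarith
  refine ⟨c, d, hT, Nat.le_of_mul_le_mul_left ?_ three_pos,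
    Nat.le_of_mul_le_mul_left ?_ three_pos⟩
  · calc 3 * (S.card * (Icc c d).card) ≤ S.card * (Icc u v).card := by nlinarith
      _ ≤ _ := h.card_mul_le.trans hmL
  · calc 3 * (S.card * q) ≤ S.card ^ 2 := by nlinarith
      _ ≤ _ := h.sq_le_card_mul.trans hmL

end IsHeavy

lemma exists_isHeavy_with_heavy_ends {S : Finset ℤ} {L : ℕ} {a b : ℤ} (hab : IsHeavy S L a b)
    (h14 : ∀ u v, IsHeavy S L u v → 14 ≤ (S ∩ Icc u v).card) :
    ∃ (u v : ℤ) (w : ℕ), IsHeavy S L u v ∧ 3 * w ≤ (Icc u v).card ∧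
      (S ∩ Icc u v).card ≤ 6 * (S ∩ Icc u (u + w - 1)).card ∧
      (S ∩ Icc u v).card ≤ 6 * (S ∩ Icc (v - w + 1) v).card := by
  obtain ⟨⟨u, v⟩, huv, hmin⟩ := (measure fun p : ℤ × ℤ => (Icc p.1 p.2).card).wf.has_min
    {p | IsHeavy S L p.1 p.2} ⟨(a, b), hab⟩
  have hmin' : ∀ c d, IsHeavy S L c d → ¬(Icc c d).card < (Icc u v).card :=
    fun c d hcd => hmin (c, d) hcd
  replace huv : IsHeavy S L u v := huv
  have hm := h14 u v huv
  have hmΛ : (S ∩ Icc u v).card ≤ (Icc u v).card := card_le_card inter_subset_right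
  have hΛ : (Icc u v).card = (v + 1 - u).toNat := Int.card_Icc u v
  set w := (Icc u v).card / 3
  refine ⟨u, v, w, huv, by omega, ?_, ?_⟩
  · by_contra! hA
    have hsplit := card_inter_Icc_add_card_inter_Icc S (u := u) (c := u + w) (v := v)
      (by omega) (by omega)
    have hrest : (Icc (u + w) v).card = (v + 1 - (u + w)).toNat := Int.card_Icc _ _
    exact hmin' (u + w) v (huv.of_trim hm (by omega) (by omega)) (by omega)
  · by_contra! hC
    have hsplit := card_inter_Icc_add_card_inter_Icc S (u := u) (c := v - w + 1) (v := v)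
      (by omega) (by omega)
    rw [add_sub_cancel_right] at hsplit
    have hrest : (Icc u (v - w)).card = (v - w + 1 - u).toNat := Int.card_Icc _ _
    exact hmin' u (v - w) (huv.of_trim hm (by omega) (by omega)) (by omega)

def HasSeparatedHalfDensePair (S : Finset ℤ) (L q : ℕ) : Prop :=
  ∃ T₁ T₂ : Finset ℤ, T₁ ⊆ S ∧ T₂ ⊆ S ∧ Separated T₁ T₂ ∧
    HasHalfDenseWindow S.card L q T₁ ∧ HasHalfDenseWindow S.card L q T₂

lemma hasSeparatedHalfDensePair_of_sparse {S : Finset ℤ} {L q : ℕ} (hS : 2 ≤ S.card)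
    (hq : 0 < q) (hsparse : S.card * q ≤ 2 * L) : HasSeparatedHalfDensePair S L q := by
  have hS₀ : S.Nonempty := card_pos.mp (by omega)
  have hlt : S.min' hS₀ < S.max' hS₀ := S.min'_lt_max'_of_card (by omega)
  have hwindow : ∀ s : ℤ, HasHalfDenseWindow S.card L q {s} := fun s =>
    ⟨s, s, by simp, by simpa using (Nat.le_mul_of_pos_right _ hq).trans hsparse, by simpa⟩
  refine ⟨{S.min' hS₀}, {S.max' hS₀}, by simp [min'_mem], by simp [max'_mem], ?_,
    hwindow _, hwindow _⟩
  exact Separated.of_subset_Icc (singleton_nonempty _) (singleton_nonempty _)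
    (singleton_subset_iff.mpr (left_mem_Icc.mpr le_rfl))
    (singleton_subset_iff.mpr (left_mem_Icc.mpr le_rfl)) (by omega) (by omega)

lemma hasSeparatedHalfDensePair_of_dense {S : Finset ℤ} {a b : ℤ} {q : ℕ} (hSI : S ⊆ Icc a b)
    (hS : S.Nonempty) (hq : 12 * q ≤ S.card + 11) (hdense : 2 * (Icc a b).card < S.card * q) :
    HasSeparatedHalfDensePair S (Icc a b).card q := by
  have hab : IsHeavy S (Icc a b).card a b := by
    rw [IsHeavy, inter_eq_left.mpr hSI]
    exact ⟨card_pos.mpr hS, le_rfl⟩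
  obtain ⟨u, v, w, huv, hw, hA, hC⟩ :=
    exists_isHeavy_with_heavy_ends hab fun u v h => h.fourteen_le hq hdense
  have h3q : 3 * q ≤ S.card := by
    have hnL : S.card ≤ (Icc a b).card := card_le_card hSI
    have : 2 < q := Nat.lt_of_mul_lt_mul_left (a := S.card) (by omega)
    omega
  have hm := huv.fourteen_le hq hdense
  have hmΛ : (S ∩ Icc u v).card ≤ (Icc u v).card := card_le_card inter_subset_right
  have hΛ : (Icc u v).card = (v + 1 - u).toNat := Int.card_Icc u v
  have hwinA : (Icc u (u + w - 1)).card = w := Int.card_Icc_add_sub_one u w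
  have hwinC : (Icc (v - w + 1) v).card = w := by simp [Int.card_Icc]
  refine ⟨S ∩ Icc u (u + w - 1), S ∩ Icc (v - w + 1) v, inter_subset_left, inter_subset_left, ?_,
    huv.hasHalfDenseWindow h3q inter_subset_right (by rw [hwinA]; exact hw) hA,
    huv.hasHalfDenseWindow h3q inter_subset_right (by rw [hwinC]; exact hw) hC⟩
  exact Separated.of_subset_Icc (card_pos.mp (by omega)) (card_pos.mp (by omega))
    inter_subset_right inter_subset_right (by omega) (by omega)

end

/-- Lemma 4.2. Let `S` be a finite set of integers with `|S| ≥ 6` and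
`I = [a, b]` an interval with `S ⊆ I`. Then there are `T₁, T₂ ⊆ S` and intervals
`I₁, I₂` with `T_j ⊆ I_j`, `(T₁, T₂)` separated, `d_{I_j}(T_j) ≥ d_I(S)/2` and
`|I_j| ≥ |S|/12`. -/
theorem separated_pair_exists (S : Finset ℤ) (hS : 6 ≤ S.card)
    (a b : ℤ) (hSI : S ⊆ Finset.Icc a b) :
    ∃ (T₁ T₂ : Finset ℤ) (a₁ b₁ a₂ b₂ : ℤ),
      T₁ ⊆ S ∧ T₂ ⊆ S ∧
      T₁ ⊆ Finset.Icc a₁ b₁ ∧ T₂ ⊆ Finset.Icc a₂ b₂ ∧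
      Separated T₁ T₂ ∧
      dens (Finset.Icc a b) S / 2 ≤ dens (Finset.Icc a₁ b₁) T₁ ∧
      dens (Finset.Icc a b) S / 2 ≤ dens (Finset.Icc a₂ b₂) T₂ ∧
      (S.card : ℝ) / 12 ≤ ((Finset.Icc a₁ b₁).card : ℝ) ∧
      (S.card : ℝ) / 12 ≤ ((Finset.Icc a₂ b₂).card : ℝ) := by
  set q := (S.card + 11) / 12
  have hnL : S.card ≤ (Finset.Icc a b).card := Finset.card_le_card hSI
  have hpair : HasSeparatedHalfDensePair S (Finset.Icc a b).card q := by
    rcases le_or_gt (S.card * q) (2 * (Finset.Icc a b).card) with hsparse | hdense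
    · exact hasSeparatedHalfDensePair_of_sparse (by omega) (by omega) hsparse
    · exact hasSeparatedHalfDensePair_of_dense hSI (Finset.card_pos.mp (by omega)) (by omega)
        hdense
  obtain ⟨T₁, T₂, hT₁S, hT₂S, hsep, hT₁, hT₂⟩ := hpair
  obtain ⟨a₁, b₁, hT₁I, hd₁, hl₁⟩ := hT₁.exists_Icc (by omega) (by omega) (by omega)
  obtain ⟨a₂, b₂, hT₂I, hd₂, hl₂⟩ := hT₂.exists_Icc (by omega) (by omega) (by omega)
  exact ⟨T₁, T₂, a₁, b₁, a₂, b₂, hT₁S, hT₂S, hT₁I, hT₂I, hsep, hd₁, hd₂, hl₁, hl₂⟩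
end

section
/- Suppose S is a nonempty finite set of positive integers, J is an interval of integers containing S, and r is a positive integer with r ≤ |J|. Then there exist a subset S' ⊆ S and an interval I of integers of size r containing S' such that d_I(S') ≥ d_J(S)/2. -/
/-!
Cut the integers from `a` on into consecutive blocks of length `r`. The interval `J` of length
`n ≥ r` is covered by `m = ⌈n / r⌉` of them, and `m r < n + r ≤ 2 n`. By pigeonhole some block
contains at least `|S| / m` points of `S`, so its density is at least `|S| / (m r) ≥ |S| / (2 n)`.
-/

section

open Finset hiding dens

theorem Nat.exists_mul_mem_Icc {n r : ℕ} (hr : 0 < r) (hrn : r ≤ n) :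
    ∃ m, n ≤ m * r ∧ m * r ≤ 2 * n := by
  refine ⟨(n + r - 1) / r, ?_⟩
  have hdiv := Nat.div_add_mod (n + r - 1) r
  have hmod := Nat.mod_lt (n + r - 1) hr
  rw [Nat.mul_comm] at hdiv
  omega

theorem Int.card_Icc_add_sub_one_s9 (c : ℤ) (r : ℕ) : #(Icc c (c + r - 1)) = r := by
  simp

theorem exists_block_div_le_dens (S : Finset ℤ) (a : ℤ) {r m : ℕ} (hr : 0 < r) (hm : 0 < m)
    (hS : ∀ s ∈ S, a ≤ s ∧ s < a + m * r) :
    ∃ S' ⊆ S, ∃ c : ℤ, S' ⊆ Icc c (c + r - 1) ∧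
      (#S : ℝ) / (m * r) ≤ dens (Icc c (c + r - 1)) S' := by
  have hr' : (0 : ℤ) < r := by exact_mod_cast hr
  have hblock : ∀ s ∈ S, (s - a) / r ∈ Ico (0 : ℤ) m := fun s hs => by
    obtain ⟨has, hsb⟩ := hS s hs
    rw [mem_Ico, Int.le_ediv_iff_mul_le hr', Int.ediv_lt_iff_lt_mul hr']
    constructor <;> linarith
  obtain ⟨y, -, hy⟩ := exists_le_card_fiber_of_nsmul_le_card_of_maps_to hblock
    (nonempty_Ico.mpr (by exact_mod_cast hm)) (b := (#S : ℝ) / m) (by simp [field])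
  refine ⟨{s ∈ S | (s - a) / r = y}, filter_subset _ _, a + y * r, fun s hs => ?_, ?_⟩
  · have := (Int.ediv_eq_iff_of_pos hr').mp (mem_filter.mp hs).2
    rw [mem_Icc]
    constructor <;> linarith
  · rw [dens, Int.card_Icc_add_sub_one_s9, ← div_div]
    gcongr

end

theorem shrink_interval_general (S : Finset ℤ)
    (a b : ℤ) (hSJ : S ⊆ Finset.Icc a b)
    (r : ℕ) (hr : 0 < r) (hrJ : r ≤ (Finset.Icc a b).card) :
    ∃ (S' : Finset ℤ) (a' b' : ℤ),
      S' ⊆ S ∧ S' ⊆ Finset.Icc a' b' ∧ (Finset.Icc a' b').card = r ∧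
      dens (Finset.Icc a b) S / 2 ≤ dens (Finset.Icc a' b') S' := by
  set n := (Finset.Icc a b).card with hn
  have hn_eq : (n : ℤ) = b + 1 - a := by
    have := Int.card_Icc a b
    omega
  obtain ⟨m, hnm, hmn⟩ := Nat.exists_mul_mem_Icc hr hrJ
  have hm : 0 < m := Nat.pos_of_mul_pos_right (by omega : 0 < m * r)
  have hcover : ∀ s ∈ S, a ≤ s ∧ s < a + m * r := fun s hs => by
    have := Finset.mem_Icc.mp (hSJ hs)
    have : (n : ℤ) ≤ m * r := by exact_mod_cast hnm
    omega
  obtain ⟨S', hS', c, hS'c, hdens⟩ := exists_block_div_le_dens S a hr hm hcover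
  refine ⟨S', c, c + r - 1, hS', hS'c, Int.card_Icc_add_sub_one_s9 c r, le_trans ?_ hdens⟩
  have hmr : (m * r : ℝ) ≤ 2 * n := by exact_mod_cast hmn
  rw [dens, div_div, ← hn, mul_comm (n : ℝ)]
  gcongr

/-- Lemma 4.3. If `S` is a nonempty finite set of positive integers,
`J` is an interval containing `S`, and `r ≤ |J|` is a positive integer, then there is a
subset `S' ⊆ S` and an interval `I` of size `r` containing `S'` with
`d_I(S') ≥ d_J(S) / 2`. -/
theorem shrink_interval (S : Finset ℤ) (hS : S.Nonempty) (hpos : ∀ s ∈ S, 0 < s)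
    (a b : ℤ) (hSJ : S ⊆ Finset.Icc a b)
    (r : ℕ) (hr : 0 < r) (hrJ : r ≤ (Finset.Icc a b).card) :
    ∃ (S' : Finset ℤ) (a' b' : ℤ),
      S' ⊆ S ∧ S' ⊆ Finset.Icc a' b' ∧ (Finset.Icc a' b').card = r ∧
      dens (Finset.Icc a b) S / 2 ≤ dens (Finset.Icc a' b') S' :=
  shrink_interval_general S a b hSJ r hr hrJ
end

section
/- For a positive integer k ≥ 1, consider the 2-coloring of the edges of the complete graph on the vertex set {1, 2, ..., 4^(k-1)} in which the edge (i, j) with i < j receives the color given by the parity of ⌊log₂(j - i)⌋. This coloring contains no convex monochromatic clique of order k + 1. -/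
/-!
Let `d₁ < d₂ < ⋯ < d_k` be the consecutive gaps of a convex monochromatic clique. For two
consecutive gaps `x < y`, `⌊log₂ (x + y)⌋` is `⌊log₂ y⌋` or `⌊log₂ y⌋ + 1`, and only the first has
the colour of the edge of length `y`. Then `x + y < 2 ^ (⌊log₂ y⌋ + 1)` forces
`⌊log₂ x⌋ < ⌊log₂ y⌋`, and equal parity improves this to `⌊log₂ x⌋ + 2 ≤ ⌊log₂ y⌋`.
Hence `⌊log₂ d_k⌋ ≥ 2 (k - 1)`, i.e. `d_k ≥ 4 ^ (k - 1)`, which no two points of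
`{1, …, 4 ^ (k - 1)}` achieve.
-/

namespace Nat

theorem log_two_add_le_log_add_one {x y : ℕ} (hxy : x ≤ y) :
    log 2 (x + y) ≤ log 2 y + 1 := by
  rcases eq_zero_or_pos y with rfl | hy
  · simp [le_zero.mp hxy]
  calc log 2 (x + y) ≤ log 2 (y * 2) := log_mono_right (by omega)
    _ = log 2 y + 1 := log_mul_base (by norm_num) hy.ne'

theorem log_two_lt_of_log_add_eq {x y : ℕ} (hx : x ≠ 0) (hy : y ≠ 0)
    (h : log 2 (x + y) = log 2 y) : log 2 x < log 2 y := by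
  have hsum : x + y < 2 ^ (log 2 y + 1) := h ▸ lt_pow_succ_log_self (by norm_num) _
  have hpow : 2 ^ log 2 y ≤ y := pow_log_le_self 2 hy
  exact log_lt_of_lt_pow hx (by rw [pow_succ] at hsum; omega)

theorem log_two_add_two_le_of_log_mod_two_eq {x y : ℕ} (hx : x ≠ 0) (hxy : x < y)
    (hxy_mod : log 2 x % 2 = log 2 y % 2)
    (hsum_mod : log 2 (x + y) % 2 = log 2 y % 2) :
    log 2 x + 2 ≤ log 2 y := by
  have hsum_ge : log 2 y ≤ log 2 (x + y) := log_mono_right (by omega)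
  have hsum_le := log_two_add_le_log_add_one hxy.le
  have hsum_eq : log 2 (x + y) = log 2 y := by omega
  have := log_two_lt_of_log_add_eq hx (by omega) hsum_eq
  omega

end Nat

theorem two_mul_le_log_gap_of_convex_monochromatic {a : ℕ → ℕ} {k pr : ℕ}
    (hmono : ∀ i, 1 ≤ i → i < k + 1 → a i < a (i + 1))
    (hconv : ∀ i, 1 ≤ i → i + 2 ≤ k + 1 → a (i + 1) - a i < a (i + 2) - a (i + 1))
    (hcol : ∀ i j, 1 ≤ i → i < j → j ≤ k + 1 → Nat.log 2 (a j - a i) % 2 = pr) :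
    ∀ i, 1 ≤ i → i ≤ k → 2 * (i - 1) ≤ Nat.log 2 (a (i + 1) - a i) := by
  intro i hi
  induction i, hi using Nat.le_induction with
  | base => simp
  | succ n hn ih =>
    intro hnk
    show 2 * n ≤ Nat.log 2 (a (n + 2) - a (n + 1))
    have hstep := hmono n hn (by omega)
    have hstep' : a (n + 1) < a (n + 2) := hmono (n + 1) (by omega) (by omega)
    have hsum : a (n + 1) - a n + (a (n + 2) - a (n + 1)) = a (n + 2) - a n := by omega
    have hcol₁ := hcol n (n + 1) hn (by omega) (by omega)
    have hcol₂ := hcol (n + 1) (n + 2) (by omega) (by omega) (by omega)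
    have hcol₁₂ := hcol n (n + 2) hn (by omega) (by omega)
    have hgap := Nat.log_two_add_two_le_of_log_mod_two_eq (by omega) (hconv n hn (by omega))
      (hcol₁.trans hcol₂.symm) (hsum ▸ hcol₁₂.trans hcol₂.symm)
    have := ih (by omega)
    omega

/-- Proposition 6.2. For `k ≥ 1`, the 2-coloring of the edges of the
complete graph on `{1, ..., 4^(k-1)}` in which the edge `(i, j)` with `i < j` receives
the parity of `⌊log₂ (j - i)⌋` contains no convex monochromatic clique of order `k+1`. -/
theorem no_convex_monochromatic_clique (k : ℕ) (hk : 1 ≤ k) :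
    ¬ ∃ a : ℕ → ℕ,
      (∀ i, 1 ≤ i → i ≤ k + 1 → a i ∈ Finset.Icc 1 (4 ^ (k - 1))) ∧
      (∀ i, 1 ≤ i → i < k + 1 → a i < a (i + 1)) ∧
      (∀ i, 1 ≤ i → i + 2 ≤ k + 1 → a (i + 1) - a i < a (i + 2) - a (i + 1)) ∧
      (∃ pr : ℕ, ∀ i j, 1 ≤ i → i < j → j ≤ k + 1 →
        Nat.log 2 (a j - a i) % 2 = pr) := by
  rintro ⟨a, hmem, hmono, hconv, pr, hcol⟩
  have hlog := two_mul_le_log_gap_of_convex_monochromatic hmono hconv hcol k hk le_rfl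
  have hlast := hmono k hk (by omega)
  have hgap : 4 ^ (k - 1) ≤ a (k + 1) - a k :=
    calc 4 ^ (k - 1) = 2 ^ (2 * (k - 1)) := by rw [pow_mul]; norm_num
      _ ≤ 2 ^ Nat.log 2 (a (k + 1) - a k) := Nat.pow_le_pow_right (by norm_num) hlog
      _ ≤ a (k + 1) - a k := Nat.pow_log_le_self 2 (by omega)
  have hlo := Finset.mem_Icc.mp (hmem k hk (by omega))
  have hhi := Finset.mem_Icc.mp (hmem (k + 1) (by omega) le_rfl)
  omega
end

section
/- For a positive integer k ≥ 1, consider the 2-coloring of the edges of the complete graph on the vertex set {1, 2, ..., 4^(k-1)} in which the edge (i, j) with i < j receives the color given by the parity of ⌊log₂(j - i)⌋. Then there is no convex sequence a₁ < a₂ < ... < a_{k+1} of vertices such that all edges (a_i, a_j) with 1 ≤ |j - i| ≤ 2 receive the same color. -/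
/-!
Let `dᵢ = a_{i+1} - a_i` be the gaps of the sequence. If `⌊log₂ d⌋ = ⌊log₂ e⌋` for positive
`d, e`, then `⌊log₂ (d + e)⌋` is one larger and so has the other parity. Hence for consecutive
gaps `dᵢ < dᵢ₊₁`, monochromatic edges `(aᵢ, aᵢ₊₁)`, `(aᵢ₊₁, aᵢ₊₂)`, `(aᵢ, aᵢ₊₂)` force
`⌊log₂ dᵢ₊₁⌋ ≥ ⌊log₂ dᵢ⌋ + 2`. The last gap is then at least `4^(k-1)`, which does not fit
in `{1, ..., 4^(k-1)}`.
-/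

namespace Nat

theorem log_two_add_of_log_eq {d e : ℕ} (hd : d ≠ 0) (he : e ≠ 0) (h : log 2 d = log 2 e) :
    log 2 (d + e) = log 2 e + 1 := by
  have hd₁ := pow_log_le_self 2 hd
  have hd₂ := lt_pow_succ_log_self one_lt_two d
  have he₁ := pow_log_le_self 2 he
  have he₂ := lt_pow_succ_log_self one_lt_two e
  rw [h] at hd₁ hd₂
  apply log_eq_of_pow_le_of_lt_pow <;> rw [pow_succ] at * <;> omega

theorem log_two_add_two_le_of_mod_two_eq {d e : ℕ} (hd : d ≠ 0) (hde : d ≤ e)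
    (hdiff : log 2 d % 2 = log 2 e % 2) (hsum : log 2 (d + e) % 2 = log 2 e % 2) :
    log 2 d + 2 ≤ log 2 e := by
  rcases (log_mono_right hde).eq_or_lt with h | h
  · have := log_two_add_of_log_eq hd (by omega) h
    omega
  · omega

theorem log_two_add_two_mul_le_of_mod_two_eq (d : ℕ → ℕ) (n : ℕ)
    (hpos : ∀ i < n, d i ≠ 0) (hmono : ∀ i < n, d i ≤ d (i + 1))
    (hdiff : ∀ i < n, log 2 (d i) % 2 = log 2 (d (i + 1)) % 2)
    (hsum : ∀ i < n, log 2 (d i + d (i + 1)) % 2 = log 2 (d (i + 1)) % 2) :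
    ∀ i ≤ n, log 2 (d 0) + 2 * i ≤ log 2 (d i) := by
  intro i hi
  induction i with
  | zero => simp
  | succ i ih =>
    have := log_two_add_two_le_of_mod_two_eq (hpos i hi) (hmono i hi) (hdiff i hi) (hsum i hi)
    have := ih (by omega)
    omega

end Nat

/-- For `k ≥ 1`, in the 2-coloring of the edges of the complete graph
on `{1, ..., 4^(k-1)}` in which the edge `(i, j)` with `i < j` receives the parity of
`⌊log₂ (j - i)⌋`, there is no convex sequence `a₁ < ... < a_{k+1}` of vertices such that
all edges `(a_i, a_j)` with `1 ≤ |j - i| ≤ 2` receive the same color. -/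
theorem no_convex_monochromatic_path_square (k : ℕ) (hk : 1 ≤ k) :
    ¬ ∃ a : ℕ → ℕ,
      (∀ i, 1 ≤ i → i ≤ k + 1 → a i ∈ Finset.Icc 1 (4 ^ (k - 1))) ∧
      (∀ i, 1 ≤ i → i < k + 1 → a i < a (i + 1)) ∧
      (∀ i, 1 ≤ i → i + 2 ≤ k + 1 → a (i + 1) - a i < a (i + 2) - a (i + 1)) ∧
      (∃ pr : ℕ, ∀ i j, 1 ≤ i → i < j → j ≤ k + 1 → j - i ≤ 2 →
        Nat.log 2 (a j - a i) % 2 = pr) := by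
  obtain ⟨m, rfl⟩ := Nat.exists_eq_add_of_le' hk
  rintro ⟨a, hmem, hmono, hconv, pr, hpr⟩
  simp only [add_tsub_cancel_right] at hmem
  have hstep : ∀ i ≤ m, a (i + 1) < a (i + 2) := fun i hi ↦ hmono (i + 1) (by omega) (by omega)
  have hgrowth := Nat.log_two_add_two_mul_le_of_mod_two_eq (fun i ↦ a (i + 2) - a (i + 1)) m
    (fun i hi ↦ by have := hstep i hi.le; omega)
    (fun i hi ↦ (hconv (i + 1) (by omega) (by omega)).le)
    (fun i hi ↦ (hpr (i + 1) (i + 2) (by omega) (by omega) (by omega) (by omega)).trans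
      (hpr (i + 2) (i + 3) (by omega) (by omega) (by omega) (by omega)).symm)
    (fun i hi ↦ by
      have := hstep i hi.le
      have : a (i + 2) < a (i + 3) := hstep (i + 1) hi
      simp only [add_assoc, Nat.reduceAdd]
      rw [show a (i + 2) - a (i + 1) + (a (i + 3) - a (i + 2)) = a (i + 3) - a (i + 1) by omega]
      exact (hpr (i + 1) (i + 3) (by omega) (by omega) (by omega) (by omega)).trans
        (hpr (i + 2) (i + 3) (by omega) (by omega) (by omega) (by omega)).symm)
    m le_rfl
  have hlast_ne : a (m + 2) - a (m + 1) ≠ 0 := by have := hstep m le_rfl; omega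
  have hlast_big : 4 ^ m ≤ a (m + 2) - a (m + 1) := calc
    4 ^ m = 2 ^ (2 * m) := by rw [pow_mul]; norm_num
    _ ≤ 2 ^ Nat.log 2 (a (m + 2) - a (m + 1)) := Nat.pow_le_pow_right two_pos (by omega)
    _ ≤ a (m + 2) - a (m + 1) := Nat.pow_log_le_self 2 hlast_ne
  have hfirst := Finset.mem_Icc.mp (hmem (m + 1) (by omega) (by omega))
  have hlast := Finset.mem_Icc.mp (hmem (m + 2) (by omega) le_rfl)
  omega
end

section
/- Consider the 2-coloring of the edges of the complete graph on the positive integers in which the edge (i, j) with i < j receives the color given by the parity of ⌊log₂(j - i)⌋. Then there is no monochromatic clique with vertices a₁ < a₂ < a₃ < a₄ < a₅ < a₆ < a₇ such that a₅ - a₃ is the largest of the second differences a₃ - a₁, a₄ - a₂, a₅ - a₃, a₆ - a₄, a₇ - a₅ (i.e., a₅ - a₃ ≥ each of the others) and a₄ - a₂ and a₆ - a₄ are the two smallest second differences (i.e., each of a₄ - a₂ and a₆ - a₄ is at most each of a₃ - a₁, a₅ - a₃, a₇ - a₅). -/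
/-!
Write `L n = ⌊log₂ n⌋`. If two positive gaps `x`, `y` have `L x = L y`, then `L (x + y) = L x + 1`;
if `L x < L y`, then `L (x + y)` is `L y` or `L y + 1`. So in a monochromatic triangle with gaps
`x`, `y` the values `L x`, `L y` differ and `L (x + y)` is the larger of them.

Apply this to the middle triangle `a₃ < a₄ < a₅`. If its upper gap `q = a₅ - a₄` has the larger `L`,
then `L (a₅ - a₃) = L q`, and `q ≤ a₇ - a₅ ≤ a₅ - a₃` squeezes `L (a₇ - a₅)` to the same value,
which the monochromatic triangle `a₃ < a₅ < a₇` forbids. If the lower gap has the larger `L`, the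
mirror argument uses the triangle `a₁ < a₃ < a₅`.
-/

namespace Nat

theorem log_two_add_of_log_eq_s14 {x y : ℕ} (hx : x ≠ 0) (hy : y ≠ 0) (h : log 2 x = log 2 y) :
    log 2 (x + y) = log 2 x + 1 := by
  have hx₁ := pow_log_le_self 2 hx
  have hy₁ := pow_log_le_self 2 hy
  have hx₂ := lt_pow_succ_log_self one_lt_two x
  have hy₂ := lt_pow_succ_log_self one_lt_two y
  rw [← h] at hy₁ hy₂
  apply log_eq_of_pow_le_of_lt_pow <;> rw [pow_succ] at * <;> omega

theorem log_two_add_le_succ_of_log_lt {x y : ℕ} (h : log 2 x < log 2 y) :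
    log 2 (x + y) ≤ log 2 y + 1 := by
  have hx : x < 2 ^ log 2 y :=
    (lt_pow_succ_log_self one_lt_two x).trans_le (Nat.pow_le_pow_right two_pos h)
  have hy := lt_pow_succ_log_self one_lt_two y
  have hy₀ : y ≠ 0 := by
    rintro rfl
    simp at h
  refine le_of_lt_succ (log_lt_of_lt_pow (by omega) ?_)
  rw [pow_succ, pow_succ] at *
  omega

theorem log_two_ne_of_modEq_add {x y : ℕ} (hx : x ≠ 0) (hy : y ≠ 0)
    (h : log 2 x ≡ log 2 (x + y) [MOD 2]) : log 2 x ≠ log 2 y := fun heq => by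
  rw [ModEq, log_two_add_of_log_eq_s14 hx hy heq] at h
  omega

theorem log_two_add_eq_of_modEq {x y : ℕ} (hlt : log 2 x < log 2 y)
    (h : log 2 y ≡ log 2 (x + y) [MOD 2]) : log 2 (x + y) = log 2 y := by
  have := log_two_add_le_succ_of_log_lt hlt
  have := log_mono_right (b := 2) (le_add_self : y ≤ x + y)
  rw [ModEq] at h
  omega

theorem not_log_two_modEq_of_le_of_le {p q s t u : ℕ} (ht : p + q = t) (hu : t + s = u)
    (hlt : log 2 p < log 2 q) (hqt : log 2 q ≡ log 2 t [MOD 2]) (hqs : q ≤ s) (hst : s ≤ t) :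
    ¬ log 2 t ≡ log 2 u [MOD 2] := by
  subst ht hu
  intro htu
  have hq : q ≠ 0 := by
    rintro rfl
    simp at hlt
  have hlog_t : log 2 (p + q) = log 2 q := log_two_add_eq_of_modEq hlt hqt
  have hlog_s : log 2 s = log 2 (p + q) :=
    le_antisymm (log_mono_right hst) (hlog_t ▸ log_mono_right hqs)
  exact log_two_ne_of_modEq_add (by omega) (by omega) htu hlog_s.symm

end Nat

/-- Indices are 0-based: `a i` stands for `a_{i+1}`. -/
theorem no_monochromatic_clique_with_second_difference_order :
    ¬ ∃ a : Fin 7 → ℕ, StrictMono a ∧ (∀ i, 0 < a i) ∧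
      (∃ pr : ℕ, ∀ i j : Fin 7, i < j → Nat.log 2 (a j - a i) % 2 = pr) ∧
      (a 2 - a 0 ≤ a 4 - a 2 ∧ a 3 - a 1 ≤ a 4 - a 2 ∧
       a 5 - a 3 ≤ a 4 - a 2 ∧ a 6 - a 4 ≤ a 4 - a 2) ∧
      (a 3 - a 1 ≤ a 2 - a 0 ∧ a 3 - a 1 ≤ a 4 - a 2 ∧ a 3 - a 1 ≤ a 6 - a 4 ∧
       a 5 - a 3 ≤ a 2 - a 0 ∧ a 5 - a 3 ≤ a 4 - a 2 ∧ a 5 - a 3 ≤ a 6 - a 4) := by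
  rintro ⟨a, ha, -, ⟨c, hc⟩, ⟨h02, -, -, h46⟩, h13, -, -, -, -, h35⟩
  have col (i j k l : Fin 7) (hij : i < j) (hkl : k < l) :
      Nat.log 2 (a j - a i) % 2 = Nat.log 2 (a l - a k) % 2 :=
    (hc i j hij).trans (hc k l hkl).symm
  have h01 := ha (show (0 : Fin 7) < 1 by decide)
  have h12 := ha (show (1 : Fin 7) < 2 by decide)
  have h23 := ha (show (2 : Fin 7) < 3 by decide)
  have h34 := ha (show (3 : Fin 7) < 4 by decide)
  have h45 := ha (show (4 : Fin 7) < 5 by decide)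
  have h56 := ha (show (5 : Fin 7) < 6 by decide)
  have hmid : Nat.log 2 (a 3 - a 2) ≠ Nat.log 2 (a 4 - a 3) :=
    Nat.log_two_ne_of_modEq_add (by omega) (by omega) <| by
      rw [show a 3 - a 2 + (a 4 - a 3) = a 4 - a 2 by omega]
      exact col 2 3 2 4 (by decide) (by decide)
  rcases hmid.lt_or_gt with hlt | hlt
  · exact Nat.not_log_two_modEq_of_le_of_le (s := a 6 - a 4) (by omega) (by omega) hlt
      (col 3 4 2 4 (by decide) (by decide)) (by omega) h46 (col 2 4 2 6 (by decide) (by decide))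
  · exact Nat.not_log_two_modEq_of_le_of_le (s := a 2 - a 0) (by omega) (by omega) hlt
      (col 2 3 2 4 (by decide) (by decide)) (by omega) h02 (col 2 4 0 4 (by decide) (by decide))
end
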